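/- Let μ be the Gibbs distribution of a permissive spin system (G,q,A_E,A_V) where G has maximum degree at most Δ. Let Λ ⊊ V, let σ,τ : Λ → [q] be partial configurations differing only at a vertex v ∈ Λ, and let n' = |V∖Λ| ≥ 1. Let P and Q be the single-site dynamics on the free vertices for μ^σ and μ^τ respectively: from a state X : V∖Λ → [q], pick u ∈ V∖Λ uniformly at random and resample X(u) from the conditional marginal μ^{σ ∪ X|_{V∖(Λ∪{u})}}_u (respectively with τ in place of σ). Then for every X : V∖Λ → [q], W(P(X),Q(X)) ≤ Δ/n', where W is the Wasserstein distance with respect to Hamming distance on configurations of V∖Λ. -/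

import Mathlib

open scoped Classical BigOperators

noncomputable section

namespace SpinFormal

variable {V : Type} [Fintype V] [DecidableEq V] {q : ℕ}

/-- `μ` is a probability distribution on the finite type `Ω`. -/
def IsDist {Ω : Type} [Fintype Ω] (μ : Ω → ℝ) : Prop :=
  (∀ x, 0 ≤ μ x) ∧ ∑ x, μ x = 1

/-- `π` is a coupling of `μ` and `ν`. -/
def IsCoupling {Ω₁ Ω₂ : Type} [Fintype Ω₁] [Fintype Ω₂]
    (π : Ω₁ × Ω₂ → ℝ) (μ : Ω₁ → ℝ) (ν : Ω₂ → ℝ) : Prop :=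
  (∀ p, 0 ≤ π p) ∧ (∀ x, ∑ y, π (x, y) = μ x) ∧ (∀ y, ∑ x, π (x, y) = ν y)

/-- 1-Wasserstein distance with respect to a cost `d`. -/
def Wass {Ω₁ Ω₂ : Type} [Fintype Ω₁] [Fintype Ω₂] (d : Ω₁ → Ω₂ → ℝ)
    (μ : Ω₁ → ℝ) (ν : Ω₂ → ℝ) : ℝ :=
  sInf {c : ℝ | ∃ π : Ω₁ × Ω₂ → ℝ, IsCoupling π μ ν ∧ ∑ p : Ω₁ × Ω₂, π p * d p.1 p.2 = c}

/-- Hamming distance between two configurations, as a real number. -/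
def hamming {W : Type} [Fintype W] {α : Type} [DecidableEq α] (σ τ : W → α) : ℝ :=
  ((Finset.univ.filter fun w => σ w ≠ τ w).card : ℝ)

/-- Total variation distance between two functions on a finite type. -/
def tvDist {X : Type} [Fintype X] (μ ν : X → ℝ) : ℝ := (∑ x, |μ x - ν x|) / 2

/-- The symmetrised edge interaction, as a function on unordered pairs.
When `AE` is symmetric this is just `AE (τ u) (τ v)` on the edge `{u,v}`. -/
def edgeFactor (AE : Fin q → Fin q → ℝ) (τ : V → Fin q) : Sym2 V → ℝ :=
  Sym2.lift ⟨fun u v => (AE (τ u) (τ v) + AE (τ v) (τ u)) / 2, fun u v => by simp [add_comm]⟩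

/-- The conditional weight `w^σ(τ)` for the pinning `σ` on `Λ`: products range over
vertices outside `Λ` and edges with at least one endpoint outside `Λ`. -/
def condWeight (G : SimpleGraph V) (AE : Fin q → Fin q → ℝ) (AV : Fin q → ℝ)
    (Λ : Finset V) (σ τ : V → Fin q) : ℝ :=
  (if ∀ v ∈ Λ, τ v = σ v then (1 : ℝ) else 0)
    * (∏ v ∈ Λᶜ, AV (τ v))
    * ∏ e ∈ Finset.univ.filter
        (fun e : Sym2 V => e ∈ G.edgeSet ∧ ¬ ∀ v ∈ e, v ∈ Λ), edgeFactor AE τ e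

/-- The conditional partition function `Z^σ`. -/
def condZ (G : SimpleGraph V) (AE : Fin q → Fin q → ℝ) (AV : Fin q → ℝ)
    (Λ : Finset V) (σ : V → Fin q) : ℝ :=
  ∑ τ : V → Fin q, condWeight G AE AV Λ σ τ

/-- The conditional Gibbs distribution `μ^σ`. -/
def condDist (G : SimpleGraph V) (AE : Fin q → Fin q → ℝ) (AV : Fin q → ℝ)
    (Λ : Finset V) (σ : V → Fin q) : (V → Fin q) → ℝ :=
  fun τ => condWeight G AE AV Λ σ τ / condZ G AE AV Λ σ

/-- A spin system is permissive if every conditional partition function is positive. -/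
def Permissive (G : SimpleGraph V) (AE : Fin q → Fin q → ℝ) (AV : Fin q → ℝ) : Prop :=
  ∀ (Λ : Finset V) (σ : V → Fin q), 0 < condZ G AE AV Λ σ

/-- Marginal of a distribution on configurations at a single vertex. -/
def marginalAt (μ : (V → Fin q) → ℝ) (u : V) (c : Fin q) : ℝ :=
  ∑ τ : V → Fin q, if τ u = c then μ τ else 0

/-- Marginal probability of a partial configuration `σ` on `Λ`. -/
def margOn (μ : (V → Fin q) → ℝ) (Λ : Finset V) (σ : V → Fin q) : ℝ :=
  ∑ τ : V → Fin q, if ∀ v ∈ Λ, τ v = σ v then μ τ else 0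

/-- Two partial configurations on `Λ` differ exactly at the vertex `v ∈ Λ`. -/
def DifferOnlyAt (Λ : Finset V) (σ τ : V → Fin q) (v : V) : Prop :=
  v ∈ Λ ∧ σ v ≠ τ v ∧ ∀ u ∈ Λ, u ≠ v → σ u = τ u

/-- `C`-coupling independence of the Gibbs distribution of a spin system. -/
def CouplingIndependence (G : SimpleGraph V) (AE : Fin q → Fin q → ℝ)
    (AV : Fin q → ℝ) (C : ℝ) : Prop :=
  ∀ (Λ : Finset V) (σ τ : V → Fin q) (v : V), DifferOnlyAt Λ σ τ v →
    Wass hamming (condDist G AE AV Λ σ) (condDist G AE AV Λ τ) ≤ C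

/-- The sphere of radius `ℓ` around `v` in `G` (w.r.t. graph distance). -/
def sphere (G : SimpleGraph V) (v : V) (ℓ : ℕ) : Finset V :=
  Finset.univ.filter fun u => G.Reachable v u ∧ G.dist v u = ℓ

end SpinFormal

namespace SpinFormal

variable {V : Type} [Fintype V] [DecidableEq V] {q : ℕ}

/-- The configuration equal to `σ` on `Λ` and to `X` off `Λ`. -/
def overlay (Λ : Finset V) (σ X : V → Fin q) : V → Fin q :=
  fun w => if w ∈ Λ then σ w else X w

/-- One step of the single-site (Glauber) dynamics on the free vertices `V∖Λ` for the
conditional distribution `μ^σ`, started from `X`: pick `u ∈ V∖Λ` uniformly at random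
and resample the value at `u` from the conditional marginal given `σ` on `Λ` and `X`
on the remaining free vertices. -/
noncomputable def singleSiteStep (G : SimpleGraph V) (AE : Fin q → Fin q → ℝ)
    (AV : Fin q → ℝ) (Λ : Finset V) (σ : V → Fin q) (X : V → Fin q) :
    (V → Fin q) → ℝ := fun Y =>
  (1 / ((Λᶜ : Finset V).card : ℝ)) * ∑ u ∈ (Λᶜ : Finset V),
    (if ∀ w : V, w ≠ u → Y w = X w then
      marginalAt (condDist G AE AV ({u} : Finset V)ᶜ (overlay Λ σ X)) u (Y u)
    else 0)

end SpinFormal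

open SpinFormal

/-! Couple the two steps by choosing the same site `u` and resampling `X u` under a coupling of
the two single-site marginals that is the identity when they coincide and independent otherwise:
the new states then differ at most at `u`, and only if the two marginals at `u` differ. The
marginal at `u` sees the pinning only through the neighbours of `u`, and `σ ∪ X`, `τ ∪ X` differ
only at `v ∈ Λ`, so the marginals differ for at most `deg v ≤ Δ` of the `n'` free sites. -/

namespace SpinFormal

section Coupling

variable {Ω₁ Ω₂ : Type} [Fintype Ω₁] [Fintype Ω₂]

theorem IsCoupling.wass_le {d : Ω₁ → Ω₂ → ℝ} {π : Ω₁ × Ω₂ → ℝ} {μ : Ω₁ → ℝ} {ν : Ω₂ → ℝ}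
    (hd : ∀ x y, 0 ≤ d x y) (h : IsCoupling π μ ν) :
    Wass d μ ν ≤ ∑ p, π p * d p.1 p.2 :=
  csInf_le ⟨0, by
    rintro _ ⟨π', hπ', rfl⟩
    exact Finset.sum_nonneg fun p _ => mul_nonneg (hπ'.1 p) (hd _ _)⟩ ⟨π, h, rfl⟩

theorem IsCoupling.mixture {ι : Type} (S : Finset ι) {r : ℝ} (hr : 0 ≤ r)
    {π : ι → Ω₁ × Ω₂ → ℝ} {μ : ι → Ω₁ → ℝ} {ν : ι → Ω₂ → ℝ}
    (h : ∀ i ∈ S, IsCoupling (π i) (μ i) (ν i)) :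
    IsCoupling (fun p => r * ∑ i ∈ S, π i p) (fun x => r * ∑ i ∈ S, μ i x)
      (fun y => r * ∑ i ∈ S, ν i y) := by
  refine ⟨fun p => mul_nonneg hr (Finset.sum_nonneg fun i hi => (h i hi).1 p), fun x => ?_,
    fun y => ?_⟩
  · rw [← Finset.mul_sum, Finset.sum_comm]
    exact congrArg _ (Finset.sum_congr rfl fun i hi => (h i hi).2.1 x)
  · rw [← Finset.mul_sum, Finset.sum_comm]
    exact congrArg _ (Finset.sum_congr rfl fun i hi => (h i hi).2.2 y)

def pushforward {Ω Ω' : Type} [Fintype Ω] [DecidableEq Ω'] (f : Ω → Ω') (μ : Ω → ℝ)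
    (y : Ω') : ℝ :=
  ∑ x, if f x = y then μ x else 0

theorem sum_pushforward_mul {Ω Ω' : Type} [Fintype Ω] [Fintype Ω'] [DecidableEq Ω']
    (f : Ω → Ω') (μ : Ω → ℝ) (g : Ω' → ℝ) :
    ∑ y, pushforward f μ y * g y = ∑ x, μ x * g (f x) := by
  simp only [pushforward, Finset.sum_mul, ite_mul, zero_mul]
  rw [Finset.sum_comm]
  simp

theorem IsCoupling.map {Ω₁' Ω₂' : Type} [Fintype Ω₁'] [Fintype Ω₂'] [DecidableEq Ω₁']
    [DecidableEq Ω₂'] {π : Ω₁ × Ω₂ → ℝ} {μ : Ω₁ → ℝ} {ν : Ω₂ → ℝ}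
    (h : IsCoupling π μ ν) (f : Ω₁ → Ω₁') (g : Ω₂ → Ω₂') :
    IsCoupling (pushforward (Prod.map f g) π) (pushforward f μ) (pushforward g ν) := by
  refine ⟨fun p => Finset.sum_nonneg fun x _ => ?_, fun y => ?_, fun y' => ?_⟩
  · split_ifs
    exacts [h.1 x, le_rfl]
  · simp only [pushforward, Prod.ext_iff, Prod.map_fst, Prod.map_snd, ← h.2.1]
    rw [Finset.sum_comm]
    simp only [Fintype.sum_prod_type, ite_and]
    exact Finset.sum_congr rfl fun x _ => by split_ifs <;> simp
  · simp only [pushforward, Prod.ext_iff, Prod.map_fst, Prod.map_snd, ← h.2.2]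
    rw [Finset.sum_comm]
    simp only [Fintype.sum_prod_type_right, ite_and, Finset.sum_ite_eq]
    exact Finset.sum_congr rfl fun x _ => by split_ifs <;> simp

theorem isCoupling_diag {Ω : Type} [Fintype Ω] [DecidableEq Ω] {μ : Ω → ℝ}
    (hμ : ∀ x, 0 ≤ μ x) : IsCoupling (fun p : Ω × Ω => if p.1 = p.2 then μ p.1 else 0) μ μ := by
  refine ⟨fun p => ?_, fun x => by simp, fun y => by simp⟩
  dsimp only
  split_ifs
  exacts [hμ _, le_rfl]

theorem isCoupling_prod {μ : Ω₁ → ℝ} {ν : Ω₂ → ℝ} (hμ : IsDist μ) (hν : IsDist ν) :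
    IsCoupling (fun p => μ p.1 * ν p.2) μ ν :=
  ⟨fun p => mul_nonneg (hμ.1 _) (hν.1 _), fun x => by simp [← Finset.mul_sum, hν.2],
    fun y => by simp [← Finset.sum_mul, hμ.2]⟩

theorem exists_coupling_discrete_cost_le {Ω : Type} [Fintype Ω] [DecidableEq Ω]
    {μ ν : Ω → ℝ} (hμ : IsDist μ) (hν : IsDist ν) :
    ∃ π, IsCoupling π μ ν ∧
      ∑ p : Ω × Ω, π p * (if p.1 = p.2 then 0 else 1) ≤ if μ = ν then 0 else 1 := by
  by_cases hμν : μ = ν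
  · subst hμν
    refine ⟨_, isCoupling_diag hμ.1, le_of_eq ?_⟩
    simp only [if_true]
    exact Finset.sum_eq_zero fun p _ => by split_ifs <;> simp
  · refine ⟨_, isCoupling_prod hμ hν, ?_⟩
    rw [if_neg hμν]
    calc ∑ p : Ω × Ω, μ p.1 * ν p.2 * (if p.1 = p.2 then 0 else 1)
        ≤ ∑ p : Ω × Ω, μ p.1 * ν p.2 := Finset.sum_le_sum fun p _ => by
          have := mul_nonneg (hμ.1 p.1) (hν.1 p.2)
          split_ifs <;> simp [this]
      _ = 1 := by rw [Fintype.sum_prod_type, ← Fintype.sum_mul_sum, hμ.2, hν.2, one_mul]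

end Coupling

section Configuration

variable {V α : Type} [Fintype V] [DecidableEq V] [DecidableEq α]

theorem pushforward_update_apply [Fintype α] (X : V → α) (u : V) (μ : α → ℝ) (Y : V → α) :
    pushforward (Function.update X u) μ Y = if ∀ w, w ≠ u → Y w = X w then μ (Y u) else 0 := by
  split_ifs with hY
  · have hYu : Y = Function.update X u (Y u) := Function.eq_update_iff.2 ⟨rfl, hY⟩
    simp only [pushforward]
    rw [hYu]
    simp [(Function.update_injective X u).eq_iff]
  · refine Finset.sum_eq_zero fun c _ => if_neg ?_
    rintro rfl
    exact hY fun w hw => Function.update_of_ne hw c X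

theorem hamming_update_update (X : V → α) (u : V) (c c' : α) :
    hamming (Function.update X u c) (Function.update X u c') = if c = c' then 0 else 1 := by
  unfold hamming
  split_ifs with hc
  · simp [hc]
  · have : (Finset.univ.filter fun w =>
        Function.update X u c w ≠ Function.update X u c' w) = {u} := by
      ext w
      by_cases hw : w = u
      · simp [hw, hc]
      · simp [hw]
    simp [this]

theorem exists_coupling_pushforward_update [Fintype α] (X : V → α) (u : V) {μ ν : α → ℝ}
    (hμ : IsDist μ) (hν : IsDist ν) :
    ∃ π, IsCoupling π (pushforward (Function.update X u) μ) (pushforward (Function.update X u) ν) ∧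
      ∑ p, π p * hamming p.1 p.2 ≤ if μ = ν then 0 else 1 := by
  obtain ⟨κ, hκ, hcost⟩ := exists_coupling_discrete_cost_le hμ hν
  refine ⟨_, hκ.map (Function.update X u) (Function.update X u), ?_⟩
  rw [sum_pushforward_mul]
  simpa only [Prod.map_fst, Prod.map_snd, hamming_update_update] using hcost

theorem wass_hamming_mixture_pushforward_update_le [Fintype α] (S : Finset V) (X : V → α)
    {M M' : V → α → ℝ} (hM : ∀ u, IsDist (M u)) (hM' : ∀ u, IsDist (M' u)) :
    Wass hamming
        (fun Y => 1 / (S.card : ℝ) * ∑ u ∈ S, pushforward (Function.update X u) (M u) Y)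
        (fun Y => 1 / (S.card : ℝ) * ∑ u ∈ S, pushforward (Function.update X u) (M' u) Y)
      ≤ 1 / (S.card : ℝ) * (S.filter fun u => M u ≠ M' u).card := by
  choose π hπ hcost using fun u => exists_coupling_pushforward_update X u (hM u) (hM' u)
  calc _ ≤ ∑ p, (1 / (S.card : ℝ) * ∑ u ∈ S, π u p) * hamming p.1 p.2 :=
        (IsCoupling.mixture S (by positivity) fun u _ => hπ u).wass_le
          fun _ _ => Nat.cast_nonneg _
    _ = 1 / (S.card : ℝ) * ∑ u ∈ S, ∑ p, π u p * hamming p.1 p.2 := by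
        simp only [mul_assoc, Finset.sum_mul, ← Finset.mul_sum]
        rw [Finset.sum_comm]
    _ ≤ 1 / (S.card : ℝ) * ∑ u ∈ S, if M u = M' u then 0 else 1 := by
        gcongr with u
        exact hcost u
    _ = 1 / (S.card : ℝ) * (S.filter fun u => M u ≠ M' u).card := by
        simp_rw [← Finset.sum_boole, ite_not]

end Configuration

section Gibbs

theorem edgeFactor_nonneg {V : Type} {q : ℕ} {AE : Fin q → Fin q → ℝ}
    (hAE : ∀ i j, 0 ≤ AE i j) (ρ : V → Fin q) (e : Sym2 V) :
    0 ≤ edgeFactor AE ρ e := by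
  induction e using Sym2.ind with
  | _ a b => exact div_nonneg (add_nonneg (hAE _ _) (hAE _ _)) zero_le_two

theorem edgeFactor_congr {V : Type} {q : ℕ} {AE : Fin q → Fin q → ℝ} {ρ ρ' : V → Fin q}
    {e : Sym2 V} (h : ∀ w ∈ e, ρ w = ρ' w) : edgeFactor AE ρ e = edgeFactor AE ρ' e := by
  induction e using Sym2.ind with
  | _ a b => simp only [edgeFactor, Sym2.lift_mk, h a (Sym2.mem_mk_left a b),
      h b (Sym2.mem_mk_right a b)]

variable {V : Type} [Fintype V] [DecidableEq V] {q : ℕ}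
  {G : SimpleGraph V} {AE : Fin q → Fin q → ℝ} {AV : Fin q → ℝ}

theorem sum_marginalAt (μ : (V → Fin q) → ℝ) (u : V) : ∑ c, marginalAt μ u c = ∑ τ, μ τ := by
  unfold marginalAt
  rw [Finset.sum_comm]
  simp

theorem marginalAt_condDist (Λ : Finset V) (η : V → Fin q) (u : V) (c : Fin q) :
    marginalAt (condDist G AE AV Λ η) u c
      = marginalAt (condWeight G AE AV Λ η) u c / condZ G AE AV Λ η := by
  simp only [marginalAt, condDist, Finset.sum_div, ite_div, zero_div]

theorem condWeight_nonneg (hAE : ∀ i j, 0 ≤ AE i j) (hAV : ∀ i, 0 ≤ AV i)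
    (Λ : Finset V) (η ρ : V → Fin q) : 0 ≤ condWeight G AE AV Λ η ρ := by
  unfold condWeight
  refine mul_nonneg (mul_nonneg ?_ (Finset.prod_nonneg fun _ _ => hAV _))
    (Finset.prod_nonneg fun e _ => edgeFactor_nonneg hAE ρ e)
  split_ifs <;> norm_num

theorem isDist_marginalAt_condDist (hAE : ∀ i j, 0 ≤ AE i j) (hAV : ∀ i, 0 ≤ AV i)
    (hperm : Permissive G AE AV) (Λ : Finset V) (η : V → Fin q) (u : V) :
    IsDist (marginalAt (condDist G AE AV Λ η) u) := by
  have hZ := hperm Λ η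
  refine ⟨fun c => Finset.sum_nonneg fun ρ _ => ?_, ?_⟩
  · split_ifs
    exacts [div_nonneg (condWeight_nonneg hAE hAV Λ η ρ) hZ.le, le_rfl]
  · rw [sum_marginalAt]
    exact (Finset.sum_div _ _ _).symm.trans (div_self hZ.ne')

theorem condWeight_eq_zero_of_not_agree {Λ : Finset V} {η ρ : V → Fin q}
    (h : ¬ ∀ v ∈ Λ, ρ v = η v) : condWeight G AE AV Λ η ρ = 0 := by
  simp [condWeight, h]

theorem marginalAt_condWeight_compl_singleton (η : V → Fin q) (u : V) (c : Fin q) :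
    marginalAt (condWeight G AE AV {u}ᶜ η) u c
      = condWeight G AE AV {u}ᶜ η (Function.update η u c) := by
  unfold marginalAt
  rw [Finset.sum_eq_single (Function.update η u c) _ (by simp), if_pos (by simp)]
  intro ρ _ hρ
  split_ifs with hρu
  · refine condWeight_eq_zero_of_not_agree fun hagree => hρ ?_
    exact Function.eq_update_iff.2 ⟨hρu, fun w hw => hagree w (by simpa using hw)⟩
  · rfl

theorem condWeight_update_congr {u : V} {η η' : V → Fin q} (h : ∀ w, G.Adj u w → η w = η' w)
    (c : Fin q) :
    condWeight G AE AV {u}ᶜ η (Function.update η u c)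
      = condWeight G AE AV {u}ᶜ η' (Function.update η' u c) := by
  have hnbhd : ∀ w, w = u ∨ G.Adj u w → Function.update η u c w = Function.update η' u c w := by
    rintro w (rfl | hw)
    · simp
    · have hwu := (G.ne_of_adj hw).symm
      rw [Function.update_of_ne hwu, Function.update_of_ne hwu, h w hw]
  have hagree : ∀ (ζ : V → Fin q), ∀ w ∈ ({u}ᶜ : Finset V), Function.update ζ u c w = ζ w := by
    intro ζ w hw
    exact Function.update_of_ne (by simpa using hw) _ _
  unfold condWeight
  rw [if_pos (hagree η), if_pos (hagree η'), compl_compl, Finset.prod_singleton,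
    Finset.prod_singleton, Function.update_self, Function.update_self]
  refine congrArg _ (Finset.prod_congr rfl fun e he => edgeFactor_congr fun w hw => ?_)
  simp only [Finset.mem_filter, Finset.mem_univ, true_and, not_forall, Finset.mem_compl,
    Finset.mem_singleton, not_not] at he
  obtain ⟨he, x, hxe, hxu⟩ := he
  rw [hxu] at hxe
  by_cases hwu : w = u
  · exact hnbhd w (Or.inl hwu)
  · exact hnbhd w (Or.inr (G.adj_iff_exists_edge.2 ⟨Ne.symm hwu, e, he, hxe, hw⟩))

theorem marginalAt_condDist_compl_singleton_congr {u : V} {η η' : V → Fin q}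
    (h : ∀ w, G.Adj u w → η w = η' w) :
    marginalAt (condDist G AE AV {u}ᶜ η) u = marginalAt (condDist G AE AV {u}ᶜ η') u := by
  have hmarg : ∀ ζ : V → Fin q, marginalAt (condDist G AE AV {u}ᶜ ζ) u = fun c =>
      condWeight G AE AV {u}ᶜ ζ (Function.update ζ u c)
        / ∑ c', condWeight G AE AV {u}ᶜ ζ (Function.update ζ u c') := by
    intro ζ
    funext c
    rw [marginalAt_condDist, condZ, ← sum_marginalAt _ u]
    simp only [marginalAt_condWeight_compl_singleton]
  simp only [hmarg, condWeight_update_congr h]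

theorem card_filter_marginalAt_ne_le_degree [DecidableRel G.Adj] {S : Finset V} {v : V}
    (hv : v ∉ S) {η η' : V → Fin q} (h : ∀ w, w ≠ v → η w = η' w) :
    (S.filter fun u => marginalAt (condDist G AE AV {u}ᶜ η) u
        ≠ marginalAt (condDist G AE AV {u}ᶜ η') u).card ≤ G.degree v := by
  rw [← G.card_neighborFinset_eq_degree]
  refine Finset.card_le_card fun u hu => ?_
  rw [Finset.mem_filter] at hu
  rw [G.mem_neighborFinset]
  by_contra hvu
  refine hu.2 (marginalAt_condDist_compl_singleton_congr fun w hw => h w ?_)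
  rintro rfl
  exact hvu hw.symm

end Gibbs

theorem DifferOnlyAt.overlay_eq {V : Type} [DecidableEq V] {q : ℕ} {Λ : Finset V}
    {σ τ : V → Fin q} {v : V} (hdiff : DifferOnlyAt Λ σ τ v) (X : V → Fin q) :
    ∀ w, w ≠ v → overlay Λ σ X w = overlay Λ τ X w := by
  intro w hw
  unfold overlay
  split_ifs with hwΛ
  exacts [hdiff.2.2 w hwΛ hw, rfl]

theorem singleSiteStep_eq {V : Type} [Fintype V] [DecidableEq V] {q : ℕ} (G : SimpleGraph V)
    (AE : Fin q → Fin q → ℝ) (AV : Fin q → ℝ) (Λ : Finset V) (σ X : V → Fin q) :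
    singleSiteStep G AE AV Λ σ X = fun Y => 1 / ((Λᶜ : Finset V).card : ℝ) *
      ∑ u ∈ Λᶜ, pushforward (Function.update X u)
        (marginalAt (condDist G AE AV {u}ᶜ (overlay Λ σ X)) u) Y := by
  funext Y
  simp only [singleSiteStep, pushforward_update_apply]

end SpinFormal

theorem single_site_one_step_disagreement_general
    {V : Type} [Fintype V] [DecidableEq V] {q : ℕ}
    (Δ : ℕ) (G : SimpleGraph V) [DecidableRel G.Adj]
    (AE : Fin q → Fin q → ℝ) (AV : Fin q → ℝ)
    (hAEnn : ∀ i j, 0 ≤ AE i j) (hAVnn : ∀ i, 0 ≤ AV i)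
    (hperm : Permissive G AE AV)
    (hdeg : ∀ u : V, G.degree u ≤ Δ)
    (Λ : Finset V)
    (σ τ : V → Fin q) (v : V) (hdiff : DifferOnlyAt Λ σ τ v) :
    ∀ X : V → Fin q,
      Wass hamming (singleSiteStep G AE AV Λ σ X) (singleSiteStep G AE AV Λ τ X)
        ≤ (Δ : ℝ) / (((Λᶜ : Finset V).card : ℝ)) := by
  intro X
  have hdist := isDist_marginalAt_condDist hAEnn hAVnn hperm
  have hcount := card_filter_marginalAt_ne_le_degree (G := G) (AE := AE) (AV := AV)
    (Finset.notMem_compl.2 hdiff.1) (hdiff.overlay_eq X)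
  rw [singleSiteStep_eq, singleSiteStep_eq]
  calc _ ≤ 1 / ((Λᶜ : Finset V).card : ℝ) * (Λᶜ.filter fun u =>
          marginalAt (condDist G AE AV {u}ᶜ (overlay Λ σ X)) u
            ≠ marginalAt (condDist G AE AV {u}ᶜ (overlay Λ τ X)) u).card :=
        wass_hamming_mixture_pushforward_update_le _ X (fun u => hdist _ _ u)
          (fun u => hdist _ _ u)
    _ ≤ 1 / ((Λᶜ : Finset V).card : ℝ) * Δ := by
        gcongr
        exact_mod_cast hcount.trans (hdeg v)
    _ = Δ / ((Λᶜ : Finset V).card : ℝ) := one_div_mul_eq_div _ _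

/-- the single-site dynamics for `μ^σ` and `μ^τ`, where the pinnings
differ only at `v ∈ Λ`, started from the same state, can be coupled with expected
Hamming disagreement at most `Δ/n'`. -/
theorem single_site_one_step_disagreement
    {V : Type} [Fintype V] [DecidableEq V] {q : ℕ}
    (Δ : ℕ) (G : SimpleGraph V) [DecidableRel G.Adj]
    (AE : Fin q → Fin q → ℝ) (AV : Fin q → ℝ)
    (hq : 2 ≤ q)
    (hAEsymm : ∀ i j, AE i j = AE j i)
    (hAEnn : ∀ i j, 0 ≤ AE i j) (hAVnn : ∀ i, 0 ≤ AV i)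
    (hperm : Permissive G AE AV)
    (hdeg : ∀ u : V, G.degree u ≤ Δ)
    (Λ : Finset V) (hΛ : Λ ≠ Finset.univ)
    (σ τ : V → Fin q) (v : V) (hdiff : DifferOnlyAt Λ σ τ v) :
    ∀ X : V → Fin q,
      Wass hamming (singleSiteStep G AE AV Λ σ X) (singleSiteStep G AE AV Λ τ X)
        ≤ (Δ : ℝ) / (((Λᶜ : Finset V).card : ℝ)) :=
  single_site_one_step_disagreement_general Δ G AE AV hAEnn hAVnn hperm hdeg Λ σ τ v hdiff
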